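/- arXiv:1105.2831 — 5 statements merged into one kernel-verified Lean document; each statement's English description precedes it below -/
import Mathlib

section
/- Pixelated Intermediate Value Theorem: if f : [a,b] → ℝ is continuous and ε > 0, then for every x ∈ [a,b] with x ∉ εℤ, the column of P_ε(f) over x (the intersection of P_ε(f) with the vertical strip I_ε(x) × ℝ, where I_ε(x) is the interval [nε, (n+1)ε] containing x) is a connected set. -/
open Set

/-- The ε-pixel with indices (i,j): the square [(i-1)ε, iε] × [(j-1)ε, jε]. -/
def pixel (ε : ℝ) (i j : ℤ) : Set (ℝ × ℝ) :=
  Icc ((i - 1 : ℤ) * ε) (i * ε) ×ˢ Icc ((j - 1 : ℤ) * ε) (j * ε)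

/-- The ε-pixelation of a set S: the union of all ε-pixels that intersect S. -/
def pixelation (ε : ℝ) (S : Set (ℝ × ℝ)) : Set (ℝ × ℝ) :=
  ⋃ (i : ℤ) (j : ℤ) (_ : (pixel ε i j ∩ S).Nonempty), pixel ε i j

/-- The column of the ε-pixelation of S over an ε-generic point x: the
intersection of the pixelation with the vertical strip I_ε(x) × ℝ, where
I_ε(x) = [⌊x/ε⌋ε, (⌊x/ε⌋+1)ε] is the grid interval containing x. -/
noncomputable def column (ε : ℝ) (S : Set (ℝ × ℝ)) (x : ℝ) : Set (ℝ × ℝ) :=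
  pixelation ε S ∩ (Icc ((⌊x / ε⌋ : ℤ) * ε) ((⌊x / ε⌋ + 1 : ℤ) * ε) ×ˢ (univ : Set ℝ))

/-- The graph of f over [a,b]. -/
def graphOn (f : ℝ → ℝ) (a b : ℝ) : Set (ℝ × ℝ) :=
  (fun x => (x, f x)) '' Icc a b


/-- The strip of `column ε S x` is `gridInterval ε ⌊x / ε⌋`. -/
def gridInterval (ε : ℝ) (n : ℤ) : Set ℝ :=
  Icc (n * ε) ((n + 1 : ℤ) * ε)

lemma convex_gridInterval (ε : ℝ) (n : ℤ) : Convex ℝ (gridInterval ε n) :=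
  convex_Icc _ _

lemma mem_gridInterval_floor {ε : ℝ} (hε : 0 < ε) (y : ℝ) :
    y ∈ gridInterval ε ⌊y / ε⌋ := by
  rw [gridInterval, mem_Icc, ← le_div_iff₀ hε, ← div_le_iff₀ hε]
  push_cast
  exact ⟨Int.floor_le _, (Int.lt_floor_add_one _).le⟩

lemma pixel_add_one (ε : ℝ) (n m : ℤ) :
    pixel ε (n + 1) (m + 1) = gridInterval ε n ×ˢ gridInterval ε m := by
  simp only [pixel, gridInterval, add_sub_cancel_right]

lemma mem_pixelation_iff {ε : ℝ} {S : Set (ℝ × ℝ)} {p : ℝ × ℝ} :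
    p ∈ pixelation ε S ↔ ∃ n m : ℤ,
      (gridInterval ε n ×ˢ gridInterval ε m ∩ S).Nonempty ∧
        p ∈ gridInterval ε n ×ˢ gridInterval ε m := by
  simp only [pixelation, mem_iUnion, exists_prop]
  constructor
  · rintro ⟨i, j, h⟩
    refine ⟨i - 1, j - 1, ?_⟩
    rwa [← pixel_add_one, sub_add_cancel, sub_add_cancel]
  · rintro ⟨n, m, h⟩
    exact ⟨n + 1, m + 1, by rwa [pixel_add_one]⟩

lemma mk_mem_pixelation {ε : ℝ} (hε : 0 < ε) {S : Set (ℝ × ℝ)} {s u w : ℝ} {n : ℤ}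
    (hS : (s, w) ∈ S) (hs : s ∈ gridInterval ε n) (hu : u ∈ gridInterval ε n) :
    (u, w) ∈ pixelation ε S :=
  have hw := mem_gridInterval_floor hε w
  mem_pixelation_iff.2 ⟨n, ⌊w / ε⌋, ⟨(s, w), ⟨hs, hw⟩, hS⟩, hu, hw⟩

lemma prod_image_subset_column {a b ε x : ℝ} (hε : 0 < ε) (f : ℝ → ℝ) {n : ℤ}
    {U K : Set ℝ} (hK : K ⊆ Icc a b ∩ gridInterval ε n)
    (hU : U ⊆ gridInterval ε n ∩ gridInterval ε ⌊x / ε⌋) :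
    U ×ˢ (f '' K) ⊆ column ε (graphOn f a b) x := by
  rintro ⟨u, _⟩ ⟨hu, t, ht, rfl⟩
  exact ⟨mk_mem_pixelation hε ⟨t, (hK ht).1, rfl⟩ (hK ht).2 (hU hu).1, (hU hu).2, trivial⟩

lemma coe_projIcc_mem_uIcc {p q s y : ℝ} (hpq : p ≤ q) (hy : y ∈ Icc p q) :
    (projIcc p q hpq s : ℝ) ∈ uIcc s y := by
  rcases le_or_gt s p with hsp | hps
  · rw [projIcc_of_le_left hpq hsp]
    exact mem_uIcc_of_le hsp hy.1
  rcases le_or_gt q s with hqs | hsq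
  · rw [projIcc_of_right_le hpq hqs]
    exact mem_uIcc_of_ge hy.2 hqs
  · rw [projIcc_of_mem hpq ⟨hps.le, hsq.le⟩]
    exact left_mem_uIcc

/-- `r` can be taken to be `s` clamped to `Icc p q`. -/
lemma exists_uIcc_subset_inter {J A : Set ℝ} (hJ : J.OrdConnected) (hA : A.OrdConnected)
    {p q s u x : ℝ} (hsJ : s ∈ J) (hsA : s ∈ A) (huA : u ∈ A) (hu : u ∈ Icc p q)
    (hxJ : x ∈ J) (hx : x ∈ Icc p q) :
    ∃ r, uIcc s r ⊆ J ∩ A ∧ uIcc r x ⊆ J ∩ Icc p q := by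
  have hpq : p ≤ q := hx.1.trans hx.2
  set r : ℝ := (projIcc p q hpq s : ℝ)
  have hrI : r ∈ Icc p q := (projIcc p q hpq s).2
  have hrJ : r ∈ J := hJ.uIcc_subset hsJ hxJ (coe_projIcc_mem_uIcc hpq hx)
  have hrA : r ∈ A := hA.uIcc_subset hsA huA (coe_projIcc_mem_uIcc hpq hu)
  exact ⟨r, subset_inter (hJ.uIcc_subset hsJ hrJ) (hA.uIcc_subset hsA hrA),
    subset_inter (hJ.uIcc_subset hrJ hxJ) (ordConnected_Icc.uIcc_subset hrI hx)⟩

/-- A point `p` of a pixel meeting the graph at `(s, f s)` is joined to `(x, f x)` through that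
pixel (cut to the strip `I`), the vertical segment `{r} × f [s, r]` and the band `I × f [r, x]`,
where `r` is `s` clamped to `I`. -/
lemma exists_isPreconnected_subset_column {a b ε x : ℝ} (hε : 0 < ε) {f : ℝ → ℝ}
    (hf : ContinuousOn f (Icc a b)) (hx : x ∈ Icc a b) {p : ℝ × ℝ}
    (hp : p ∈ column ε (graphOn f a b) x) :
    ∃ T ⊆ column ε (graphOn f a b) x, (x, f x) ∈ T ∧ p ∈ T ∧ IsPreconnected T := by
  set I := gridInterval ε ⌊x / ε⌋
  obtain ⟨hpS, hpI, -⟩ := hp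
  obtain ⟨n, m, ⟨_, ⟨hsn, hsm⟩, s, hs, rfl⟩, hpnm⟩ := mem_pixelation_iff.1 hpS
  have hxI : x ∈ I := mem_gridInterval_floor hε x
  obtain ⟨r, hsr, hrx⟩ := exists_uIcc_subset_inter ordConnected_Icc
    (convex_gridInterval ε n).ordConnected hs hsn hpnm.1 hpI hx hxI
  have hrn : r ∈ gridInterval ε n := (hsr right_mem_uIcc).2
  have hrI : r ∈ I := (hrx left_mem_uIcc).2
  set P := gridInterval ε n ×ˢ gridInterval ε m ∩ I ×ˢ univ
  have hP : P ⊆ column ε (graphOn f a b) x := fun q hq =>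
    ⟨mem_pixelation_iff.2 ⟨n, m, ⟨_, ⟨hsn, hsm⟩, s, hs, rfl⟩, hq.1⟩, hq.2⟩
  have hV := prod_image_subset_column hε f (U := {r}) hsr (singleton_subset_iff.2 ⟨hrn, hrI⟩)
  have hB := prod_image_subset_column hε f (U := I) hrx (inter_self I).ge
  have hPc : IsPreconnected P := (((convex_gridInterval ε n).prod
    (convex_gridInterval ε m)).inter ((convex_gridInterval ε _).prod convex_univ)).isPreconnected
  have hVc : IsPreconnected ({r} ×ˢ (f '' uIcc s r)) := isPreconnected_singleton.prod
    (isPreconnected_uIcc.image f (hf.mono (hsr.trans inter_subset_left)))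
  have hBc : IsPreconnected (I ×ˢ (f '' uIcc r x)) :=
    (convex_gridInterval ε _).isPreconnected.prod
      (isPreconnected_uIcc.image f (hf.mono (hrx.trans inter_subset_left)))
  refine ⟨P ∪ {r} ×ˢ (f '' uIcc s r) ∪ I ×ˢ (f '' uIcc r x),
    union_subset (union_subset hP hV) hB, Or.inr ⟨hxI, x, right_mem_uIcc, rfl⟩,
    Or.inl (Or.inl ⟨hpnm, hpI, trivial⟩), ?_⟩
  refine IsPreconnected.union (r, f r) (Or.inr ⟨rfl, r, right_mem_uIcc, rfl⟩)
    ⟨hrI, r, left_mem_uIcc, rfl⟩ ?_ hBc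
  exact hPc.union (r, f s) ⟨⟨hrn, hsm⟩, hrI, trivial⟩ ⟨rfl, s, left_mem_uIcc, rfl⟩ hVc

theorem pixelated_IVT_general (a b ε : ℝ) (hε : 0 < ε) (f : ℝ → ℝ)
    (hf : ContinuousOn f (Icc a b)) (x : ℝ) (hx : x ∈ Icc a b) :
    IsConnected (column ε (graphOn f a b) x) := by
  have hxI := mem_gridInterval_floor hε x
  refine ⟨⟨(x, f x), mk_mem_pixelation hε ⟨x, hx, rfl⟩ hxI hxI, hxI, trivial⟩, ?_⟩
  exact isPreconnected_of_forall (x, f x) fun p hp =>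
    exists_isPreconnected_subset_column hε hf hx hp

/-- Pixelated Intermediate Value Theorem: for a continuous function
f : [a,b] → ℝ and an ε-generic x ∈ [a,b], the column of P_ε(f) over x
is a connected set. -/
theorem pixelated_IVT (a b ε : ℝ) (hab : a ≤ b) (hε : 0 < ε) (f : ℝ → ℝ)
    (hf : ContinuousOn f (Icc a b)) (x : ℝ) (hx : x ∈ Icc a b)
    (hgen : ∀ n : ℤ, x ≠ n * ε) :
    IsConnected (column ε (graphOn f a b) x) :=
  pixelated_IVT_general a b ε hε f hf x hx
end

section
/- If S = S(β,τ) = {(x,y) : x ∈ [a,b], β(x) ≤ y ≤ τ(x)} is an elementary set, where β, τ : [a,b] → ℝ are continuous with β ≤ τ, then for every x ∈ [a,b] \ εℤ, the column C_ε(S,x) of the ε-pixelation of S over x is connected. -/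
/-!
The pixelation is the union over pixel columns `i` of `cell ε i ×ˢ rowSpan ε S i`, where
`rowSpan ε S i` is the union of the row cells `j` whose pixel `(i, j)` meets `S`. For an elementary
set these `j` form an interval of integers: the set of heights `⋃ x, [β x, τ x]` over an interval
of abscissae is an interval, since each `[β x, τ x]` contains `τ x` and `τ` is continuous. So every
pixel column is a product of intervals. Its trace on the strip over `cell ε m` meets the central
piece `cell ε m ×ˢ rowSpan ε S m` whenever it is nonempty: the abscissae of `S` form an interval, so
`S` has a point over `cell ε i ∩ cell ε m`, and its height lies in both row spans.
-/

open Set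

theorem Set.OrdConnected.inter_inter_uIcc_nonempty {α : Type*} [LinearOrder α] {A B : Set α}
    (hA : A.OrdConnected) (hB : B.OrdConnected) {p q u : α} (hp : p ∈ A) (hq : q ∈ B)
    (hu : u ∈ A ∩ B) : (A ∩ B ∩ uIcc p q).Nonempty := by
  set c := max (min p q) (min u (max p q))
  refine ⟨c, ⟨hA.uIcc_subset hp hu.1 ?_, hB.uIcc_subset hq hu.2 ?_⟩, ?_⟩ <;>
    simp only [mem_uIcc, c] <;> grind

theorem IsPreconnected.iUnion_of_inter_nonempty {α ι : Type*} [TopologicalSpace α]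
    {s : ι → Set α} (i₀ : ι) (H : ∀ i, IsPreconnected (s i))
    (hmeet : ∀ i, (s i).Nonempty → (s i ∩ s i₀).Nonempty) : IsPreconnected (⋃ i, s i) := by
  have hU : (⋃ i, s i) = ⋃ i ∈ {i | (s i).Nonempty}, s i := by
    ext p; simp only [mem_iUnion, mem_ofPred_eq, exists_prop]
    exact ⟨fun ⟨i, hi⟩ => ⟨i, ⟨p, hi⟩, hi⟩, fun ⟨i, _, hi⟩ => ⟨i, hi⟩⟩
  rw [hU]
  refine IsPreconnected.biUnion_of_reflTransGen (fun i _ => H i) fun i hi j hj => ?_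
  have hi₀ : (s i₀).Nonempty := (hmeet i hi).mono inter_subset_right
  exact .head ⟨hmeet i hi, hi⟩ (.single ⟨inter_comm (s j) _ ▸ hmeet j hj, hi₀⟩)

theorem Set.OrdConnected.biUnion_Icc_of_continuousOn {D : Set ℝ} {β τ : ℝ → ℝ}
    (hD : D.OrdConnected) (hτ : ContinuousOn τ D) (hle : ∀ x ∈ D, β x ≤ τ x) :
    (⋃ x ∈ D, Icc (β x) (τ x)).OrdConnected := by
  refine ⟨fun y₁ hy₁ y₂ hy₂ y hy => ?_⟩
  simp only [mem_iUnion, mem_Icc, exists_prop] at hy₁ hy₂ ⊢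
  obtain ⟨x₁, hx₁, hβ₁, -⟩ := hy₁
  obtain ⟨x₂, hx₂, -, hτ₂⟩ := hy₂
  rcases le_or_gt y (τ x₁) with hy₁ | hy₁
  · exact ⟨x₁, hx₁, hβ₁.trans hy.1, hy₁⟩
  · have hsub := hD.uIcc_subset hx₁ hx₂
    obtain ⟨x, hx, rfl⟩ :=
      intermediate_value_uIcc (hτ.mono hsub) (Icc_subset_uIcc ⟨hy₁.le, hy.2.trans hτ₂⟩)
    exact ⟨x, hsub hx, hle x (hsub hx), le_rfl⟩

def cell (ε : ℝ) (k : ℤ) : Set ℝ := Icc ((k - 1 : ℤ) * ε) (k * ε)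

section Cells

variable {ε : ℝ}

theorem ordConnected_cell (k : ℤ) : (cell ε k).OrdConnected := ordConnected_Icc

theorem pixel_eq_cell_prod (i j : ℤ) : pixel ε i j = cell ε i ×ˢ cell ε j := rfl

theorem mem_cell_floor_add_one (hε : 0 < ε) (y : ℝ) : y ∈ cell ε (⌊y / ε⌋ + 1) := by
  constructor <;> push_cast
  · simpa using (le_div_iff₀ hε).mp (Int.floor_le (y / ε))
  · exact ((div_lt_iff₀ hε).mp (Int.lt_floor_add_one (y / ε))).le

theorem cell_inter_cell_succ_nonempty (hε : 0 ≤ ε) (j : ℤ) :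
    (cell ε j ∩ cell ε (j + 1)).Nonempty :=
  ⟨j * ε, ⟨by push_cast; nlinarith, le_rfl⟩, ⟨by push_cast; simp, by push_cast; nlinarith⟩⟩

theorem isPreconnected_biUnion_cell (hε : 0 ≤ ε) {K : Set ℤ} (hK : K.OrdConnected) :
    IsPreconnected (⋃ j ∈ K, cell ε j) :=
  .biUnion_of_chain hK (fun j _ => (ordConnected_cell j).isPreconnected) fun j _ _ =>
    cell_inter_cell_succ_nonempty hε j

theorem ordConnected_setOf_cell_inter_nonempty (hε : 0 ≤ ε) {Y : Set ℝ} (hY : Y.OrdConnected) :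
    {j : ℤ | (cell ε j ∩ Y).Nonempty}.OrdConnected := by
  refine ⟨fun j₁ ⟨y₁, hy₁, hy₁Y⟩ j₂ ⟨y₂, hy₂, hy₂Y⟩ j hj => ?_⟩
  have hj₁ : (j₁ : ℝ) ≤ j := by exact_mod_cast hj.1
  have hj₂ : (j : ℝ) ≤ j₂ := by exact_mod_cast hj.2
  simp only [cell, mem_Icc, Int.cast_sub, Int.cast_one] at hy₁ hy₂ ⊢
  rcases le_or_gt ((j - 1) * ε) y₁ with hy | hy
  · exact ⟨y₁, ⟨hy, hy₁.2.trans (by nlinarith)⟩, hy₁Y⟩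
  · refine ⟨(j - 1) * ε, ⟨le_rfl, by linarith⟩, hY.out hy₁Y hy₂Y ⟨hy.le, ?_⟩⟩
    nlinarith

end Cells

def pixelRows (ε : ℝ) (S : Set (ℝ × ℝ)) (i : ℤ) : Set ℤ := {j | (pixel ε i j ∩ S).Nonempty}

def rowSpan (ε : ℝ) (S : Set (ℝ × ℝ)) (i : ℤ) : Set ℝ := ⋃ j ∈ pixelRows ε S i, cell ε j

section Pixelation

variable {ε : ℝ} {S : Set (ℝ × ℝ)}

theorem mem_rowSpan (hε : 0 < ε) {p : ℝ × ℝ} {i : ℤ} (hp : p ∈ S) (hi : p.1 ∈ cell ε i) :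
    p.2 ∈ rowSpan ε S i :=
  mem_biUnion (x := ⌊p.2 / ε⌋ + 1) ⟨p, ⟨hi, mem_cell_floor_add_one hε _⟩, hp⟩
    (mem_cell_floor_add_one hε _)

theorem pixelation_eq_iUnion_prod_rowSpan :
    pixelation ε S = ⋃ i, cell ε i ×ˢ rowSpan ε S i := by
  simp only [pixelation, rowSpan, pixelRows, pixel_eq_cell_prod, prod_iUnion, mem_ofPred_eq]

theorem pixelation_inter_prod_univ (J : Set ℝ) :
    pixelation ε S ∩ J ×ˢ univ = ⋃ i, (cell ε i ∩ J) ×ˢ rowSpan ε S i := by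
  simp only [pixelation_eq_iUnion_prod_rowSpan, iUnion_inter, prod_inter_prod, inter_univ]

theorem isConnected_pixelation_inter_cell_prod_univ (hε : 0 < ε) (m : ℤ)
    (hrows : ∀ i, (pixelRows ε S i).OrdConnected) (hfst : (Prod.fst '' S).OrdConnected)
    (hS : (S ∩ cell ε m ×ˢ univ).Nonempty) :
    IsConnected (pixelation ε S ∩ cell ε m ×ˢ univ) := by
  obtain ⟨q, hqS, hqm, -⟩ := hS
  rw [pixelation_inter_prod_univ]
  refine ⟨⟨q, mem_iUnion.2 ⟨m, ⟨hqm, hqm⟩, mem_rowSpan hε hqS hqm⟩⟩, ?_⟩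
  refine IsPreconnected.iUnion_of_inter_nonempty m (fun i => ?_) fun i ⟨u, ⟨hui, hum⟩, hv⟩ => ?_
  · exact ((ordConnected_cell i).inter (ordConnected_cell m)).isPreconnected.prod
      (isPreconnected_biUnion_cell hε.le (hrows i))
  · obtain ⟨j, ⟨p, ⟨hpi, -⟩, hpS⟩, -⟩ := mem_iUnion₂.1 hv
    obtain ⟨c, ⟨hci, hcm⟩, hc⟩ :=
      (ordConnected_cell i).inter_inter_uIcc_nonempty (ordConnected_cell m) hpi hqm ⟨hui, hum⟩
    obtain ⟨r, hrS, rfl⟩ := hfst.uIcc_subset (mem_image_of_mem _ hpS) (mem_image_of_mem _ hqS) hc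
    exact ⟨r, ⟨⟨hci, hcm⟩, mem_rowSpan hε hrS hci⟩, ⟨hcm, hcm⟩, mem_rowSpan hε hrS hcm⟩

theorem column_eq_pixelation_inter_cell_prod_univ (x : ℝ) :
    column ε S x = pixelation ε S ∩ cell ε (⌊x / ε⌋ + 1) ×ˢ univ := by
  simp [column, cell]

end Pixelation

def elementarySet (I : Set ℝ) (β τ : ℝ → ℝ) : Set (ℝ × ℝ) :=
  {p | p.1 ∈ I ∧ β p.1 ≤ p.2 ∧ p.2 ≤ τ p.1}

section Elementary

variable {I : Set ℝ} {β τ : ℝ → ℝ}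

theorem fst_image_elementarySet (hle : ∀ x ∈ I, β x ≤ τ x) :
    Prod.fst '' elementarySet I β τ = I := by
  ext x
  exact ⟨fun ⟨p, hp, hpx⟩ => hpx ▸ hp.1, fun hx => ⟨(x, β x), ⟨hx, le_rfl, hle x hx⟩, rfl⟩⟩

theorem pixelRows_elementarySet (ε : ℝ) (i : ℤ) :
    pixelRows ε (elementarySet I β τ) i =
      {j | (cell ε j ∩ ⋃ x ∈ cell ε i ∩ I, Icc (β x) (τ x)).Nonempty} := by
  ext j
  constructor
  · rintro ⟨p, ⟨hpi, hpj⟩, hpI, hβp, hτp⟩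
    exact ⟨p.2, hpj, mem_biUnion ⟨hpi, hpI⟩ ⟨hβp, hτp⟩⟩
  · rintro ⟨y, hyj, hy⟩
    obtain ⟨x, ⟨hxi, hxI⟩, hβx, hτx⟩ := mem_iUnion₂.1 hy
    exact ⟨(x, y), ⟨hxi, hyj⟩, hxI, hβx, hτx⟩

theorem ordConnected_pixelRows_elementarySet {ε : ℝ} (hε : 0 ≤ ε) (hI : I.OrdConnected)
    (hτ : ContinuousOn τ I) (hle : ∀ x ∈ I, β x ≤ τ x) (i : ℤ) :
    (pixelRows ε (elementarySet I β τ) i).OrdConnected := by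
  rw [pixelRows_elementarySet]
  exact ordConnected_setOf_cell_inter_nonempty hε <|
    ((ordConnected_cell i).inter hI).biUnion_Icc_of_continuousOn (hτ.mono inter_subset_right)
      fun x hx => hle x hx.2

end Elementary

theorem elementary_column_connected_general (a b ε : ℝ) (hε : 0 < ε)
    (β τ : ℝ → ℝ)
    (hτ : ContinuousOn τ (Icc a b))
    (hle : ∀ x ∈ Icc a b, β x ≤ τ x)
    (x : ℝ) (hx : x ∈ Icc a b) :
    IsConnected
      (column ε {p : ℝ × ℝ | p.1 ∈ Icc a b ∧ β p.1 ≤ p.2 ∧ p.2 ≤ τ p.1} x) := by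
  change IsConnected (column ε (elementarySet (Icc a b) β τ) x)
  have hfst : (Prod.fst '' elementarySet (Icc a b) β τ).OrdConnected := by
    rw [fst_image_elementarySet hle]
    exact ordConnected_Icc
  have hxS : (x, β x) ∈ elementarySet (Icc a b) β τ := ⟨hx, le_rfl, hle x hx⟩
  rw [column_eq_pixelation_inter_cell_prod_univ]
  exact isConnected_pixelation_inter_cell_prod_univ hε _
    (ordConnected_pixelRows_elementarySet hε.le ordConnected_Icc hτ hle) hfst
    ⟨_, hxS, mem_cell_floor_add_one hε x, trivial⟩

/-- For an elementary set S = {(x,y) : x ∈ [a,b], β(x) ≤ y ≤ τ(x)} with β, τ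
continuous and β ≤ τ, the column of the ε-pixelation of S over any ε-generic
x ∈ [a,b] is connected. -/
theorem elementary_column_connected (a b ε : ℝ) (hab : a ≤ b) (hε : 0 < ε)
    (β τ : ℝ → ℝ)
    (hβ : ContinuousOn β (Icc a b)) (hτ : ContinuousOn τ (Icc a b))
    (hle : ∀ x ∈ Icc a b, β x ≤ τ x)
    (x : ℝ) (hx : x ∈ Icc a b) (hgen : ∀ n : ℤ, x ≠ n * ε) :
    IsConnected
      (column ε {p : ℝ × ℝ | p.1 ∈ Icc a b ∧ β p.1 ≤ p.2 ∧ p.2 ≤ τ p.1} x) :=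
  elementary_column_connected_general a b ε hε β τ hτ hle x hx
end

section
/- Consider two half-lines from the origin in ℝ²: ℓ₀ with slope m₀ = a/b and ℓ₁ with slope m₁ = c/d, where a/b < c/d are consecutive terms of a Farey series, so bc − ad = 1. Define for each positive integer i: U_i = ⌊m₁(i−1)⌋ if m₁(i−1) ∉ ℤ, else m₁(i−1) − 1; and L_i = ⌈m₀ i⌉ if m₀ i ∉ ℤ, else m₀ i + 1; and D_i = U_i − L_i. Then D_{i+bd} = D_i + 1 for all i ≥ 1. -/
open Set
open scoped Classical

/-- U_i: the lowest row of the unit pixelation of the half-line of slope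
m₁ = c/d in the i-th column: ⌊m₁(i−1)⌋ if m₁(i−1) ∉ ℤ, and m₁(i−1) − 1
otherwise. -/
noncomputable def Ufun (c d : ℤ) (i : ℤ) : ℤ :=
  if ∃ k : ℤ, ((c : ℝ) / d) * (i - 1) = k then
    ⌊((c : ℝ) / d) * (i - 1)⌋ - 1
  else
    ⌊((c : ℝ) / d) * (i - 1)⌋

/-- L_i: the highest row of the unit pixelation of the half-line of slope
m₀ = a/b in the i-th column: ⌈m₀ i⌉ if m₀ i ∉ ℤ, and m₀ i + 1 otherwise. -/
noncomputable def Lfun (a b : ℤ) (i : ℤ) : ℤ :=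
  if ∃ k : ℤ, ((a : ℝ) / b) * i = k then
    ⌈((a : ℝ) / b) * i⌉ + 1
  else
    ⌈((a : ℝ) / b) * i⌉

/-- D_i = U_i − L_i. -/
noncomputable def Dfun (a b c d : ℤ) (i : ℤ) : ℤ :=
  Ufun c d i - Lfun a b i

/-! Moving `n·d` columns to the right raises the line of slope `c/d` by exactly `n·c` rows, an
integer, so neither the integrality test nor the fractional part changes; hence `U` is shifted
by `n·c`, and likewise `L` by `n·a` after `n·b` columns. With `n = b` resp. `n = d`, the
difference `D` gains `bc − ad = 1` after `bd` columns. -/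

lemma exists_intCast_eq_add_intCast_iff (x : ℝ) (m : ℤ) :
    (∃ k : ℤ, x + m = k) ↔ ∃ k : ℤ, x = k := by
  constructor
  · rintro ⟨k, hk⟩
    exact ⟨k - m, by push_cast; linarith⟩
  · rintro ⟨k, hk⟩
    exact ⟨k + m, by push_cast; linarith⟩

lemma Ufun_add_mul (c : ℤ) {d : ℤ} (hd : d ≠ 0) (n i : ℤ) :
    Ufun c d (i + n * d) = Ufun c d i + n * c := by
  have hd' : (d : ℝ) ≠ 0 := Int.cast_ne_zero.mpr hd
  have shift : (c : ℝ) / d * ((i + n * d : ℤ) - 1) = c / d * (i - 1) + ((n * c : ℤ) : ℝ) := by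
    push_cast
    field_simp
    ring
  rw [Ufun, Ufun, shift, exists_intCast_eq_add_intCast_iff, Int.floor_add_intCast]
  split <;> ring

lemma Lfun_add_mul (a : ℤ) {b : ℤ} (hb : b ≠ 0) (n i : ℤ) :
    Lfun a b (i + n * b) = Lfun a b i + n * a := by
  have hb' : (b : ℝ) ≠ 0 := Int.cast_ne_zero.mpr hb
  have shift : (a : ℝ) / b * ((i + n * b : ℤ) : ℝ) = a / b * i + ((n * a : ℤ) : ℝ) := by
    push_cast
    field_simp
  rw [Lfun, Lfun, shift, exists_intCast_eq_add_intCast_iff, Int.ceil_add_intCast]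
  split <;> ring

theorem D_periodicity_general (a b c d : ℤ) (hb : 0 < b)
    (hd : 0 < d) (hFarey : b * c - a * d = 1) :
    ∀ i : ℤ, 1 ≤ i → Dfun a b c d (i + b * d) = Dfun a b c d i + 1 := by
  intro i _
  rw [Dfun, Dfun, Ufun_add_mul c hd.ne' b i, mul_comm b d, Lfun_add_mul a hb.ne' d i]
  linarith

/-- For consecutive Farey fractions a/b < c/d (so bc − ad = 1), one has
D_{i+bd} = D_i + 1 for every i ≥ 1. -/
theorem D_periodicity (a b c d : ℤ) (ha : 0 < a) (hb : 0 < b) (hc : 0 < c)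
    (hd : 0 < d) (hFarey : b * c - a * d = 1) :
    ∀ i : ℤ, 1 ≤ i → Dfun a b c d (i + b * d) = Dfun a b c d i + 1 :=
  D_periodicity_general a b c d hb hd hFarey
end

section
/- Let a/b < c/d be consecutive members of a Farey series (so bc − ad = 1). Define D_i = U_i − L_i as in the pixelation of the angle A(c/d, a/b), where U_i = ⌊(c/d)(i−1)⌋ (adjusted by −1 if (c/d)(i−1) ∈ ℤ) and L_i = ⌈(a/b)i⌉ (adjusted by +1 if (a/b)i ∈ ℤ). Then the smallest positive integer k₁ with D_{k₁} = 1 equals bd + bc + b + d. -/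
open Set
open scoped Classical

/-!
Both boundary rows are read off through floor and ceiling: `U_i = ⌈c(i-1)/d⌉ - 1` and
`L_i = ⌊ai/b⌋ + 1`, so `D_i = 1` says `⌈c(i-1)/d⌉ = p` and `⌊ai/b⌋ = p - 3` for some `p`.
By integrality, `d(p-1) + 1 ≤ c(i-1)` and `ai + 1 ≤ b(p-2)`; multiplying by `b` and `d` and
subtracting, `bc - ad = 1` collapses the left side to `i - bc`, leaving `i ≥ bd + bc + b + d`.
At `i = bd + bc + b + d` both estimates are equalities.
-/

section FloorRing

variable {R : Type*} [Ring R] [LinearOrder R] [IsStrictOrderedRing R] [FloorRing R]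

lemma floor_sub_one_ite_eq_ceil_sub_one (x : R) :
    (if ∃ k : ℤ, x = k then ⌊x⌋ - 1 else ⌊x⌋) = ⌈x⌉ - 1 := by
  split_ifs with h
  · obtain ⟨k, rfl⟩ := h
    simp
  · rw [(Int.ceil_eq_floor_add_one_iff_notMem x).2 fun ⟨k, hk⟩ => h ⟨k, hk.symm⟩]
    ring

lemma ceil_add_one_ite_eq_floor_add_one (x : R) :
    (if ∃ k : ℤ, x = k then ⌈x⌉ + 1 else ⌈x⌉) = ⌊x⌋ + 1 := by
  split_ifs with h
  · obtain ⟨k, rfl⟩ := h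
    simp
  · exact (Int.ceil_eq_floor_add_one_iff_notMem x).2 fun ⟨k, hk⟩ => h ⟨k, hk.symm⟩

end FloorRing

section FloorField

variable {K : Type*} [Field K] [LinearOrder K] [IsStrictOrderedRing K] [FloorRing K]

lemma Int.ceil_intCast_div_eq_iff {m d z : ℤ} (hd : 0 < d) :
    ⌈(m : K) / d⌉ = z ↔ d * (z - 1) < m ∧ m ≤ d * z := by
  have hd' : (0 : K) < d := by exact_mod_cast hd
  rw [Int.ceil_eq_iff, lt_div_iff₀ hd', div_le_iff₀ hd']
  norm_cast
  simp only [mul_comm]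

lemma Int.floor_intCast_div_eq_iff {n b z : ℤ} (hb : 0 < b) :
    ⌊(n : K) / b⌋ = z ↔ b * z ≤ n ∧ n < b * (z + 1) := by
  have hb' : (0 : K) < b := by exact_mod_cast hb
  rw [Int.floor_eq_iff, le_div_iff₀ hb', div_lt_iff₀ hb']
  norm_cast
  simp only [mul_comm]

end FloorField

lemma Dfun_eq_ceil_sub_floor (a b c d i : ℤ) :
    Dfun a b c d i = ⌈((c * (i - 1) : ℤ) : ℝ) / d⌉ - ⌊((a * i : ℤ) : ℝ) / b⌋ - 2 := by
  rw [Dfun, Ufun, Lfun, floor_sub_one_ite_eq_ceil_sub_one, ceil_add_one_ite_eq_floor_add_one]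
  push_cast
  rw [div_mul_eq_mul_div, div_mul_eq_mul_div]
  ring

theorem first_touch_index_general (a b c d : ℤ) (hb : 0 < b) (hc : 0 < c) (hd : 0 < d)
    (hFarey : b * c - a * d = 1) :
    IsLeast {i : ℤ | 1 ≤ i ∧ Dfun a b c d i = 1} (b * d + b * c + b + d) := by
  refine ⟨⟨by nlinarith, ?_⟩, ?_⟩
  · have hU : ⌈((c * (b * d + b * c + b + d - 1) : ℤ) : ℝ) / d⌉ = b * c + a * c + a + c + 1 := by
      have : c * (b * d + b * c + b + d - 1) = d * (b * c + a * c + a + c) + 1 := by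
        linear_combination (c + 1) * hFarey
      exact (Int.ceil_intCast_div_eq_iff hd).2 ⟨by linarith, by linarith⟩
    have hL : ⌊((a * (b * d + b * c + b + d) : ℤ) : ℝ) / b⌋ = a * c + a * d + a + c - 1 := by
      have : a * (b * d + b * c + b + d) = b * (a * c + a * d + a + c - 1) + (b - 1) := by
        linear_combination -hFarey
      exact (Int.floor_intCast_div_eq_iff hb).2 ⟨by linarith, by linarith⟩
    rw [Dfun_eq_ceil_sub_floor, hU, hL]
    linear_combination hFarey
  · rintro i ⟨-, hi⟩
    rw [Dfun_eq_ceil_sub_floor] at hi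
    set p := ⌈((c * (i - 1) : ℤ) : ℝ) / d⌉
    set q := ⌊((a * i : ℤ) : ℝ) / b⌋
    have hp : d * (p - 1) + 1 ≤ c * (i - 1) := ((Int.ceil_intCast_div_eq_iff hd).1 rfl).1
    have hq : a * i + 1 ≤ b * (q + 1) := ((Int.floor_intCast_div_eq_iff hb).1 rfl).2
    have hpq : p = q + 3 := by omega
    linear_combination b * hp + d * hq - b * d * hpq + i * hFarey

/-- For consecutive Farey fractions a/b < c/d ≤ 1 (in lowest terms, with
bc − ad = 1), the smallest positive index i with D_i = 1 is
k₁ = bd + bc + b + d. -/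
theorem first_touch_index (a b c d : ℤ) (ha : 0 < a) (hb : 0 < b) (hc : 0 < c)
    (hd : 0 < d)
    (hab : Int.gcd a b = 1) (hcd : Int.gcd c d = 1)
    (hlt : (a : ℝ) / b < (c : ℝ) / d) (hle1 : (c : ℝ) / d ≤ 1)
    (hFarey : b * c - a * d = 1) :
    IsLeast {i : ℤ | 1 ≤ i ∧ Dfun a b c d i = 1} (b * d + b * c + b + d) :=
  first_touch_index_general a b c d hb hc hd hFarey
end

section
/- For every positive integer n, the ε-pixelation of the angle A(1/2, n/(2n+1)) — the union of the two half-lines from the origin with slopes 1/2 and n/(2n+1) (x ≥ 0) — contains exactly 2n holes; that is, the first homology of P_ε(A(1/2, n/(2n+1))) has rank 2n, independently of ε > 0. -/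
open Set

/-- The angle A(β,α) with slopes α < β: the union of the two half-lines from
the origin with slopes α and β over x ≥ 0. -/
def angle (β α : ℝ) : Set (ℝ × ℝ) :=
  {p : ℝ × ℝ | 0 ≤ p.1 ∧ (p.2 - α * p.1) * (p.2 - β * p.1) = 0}

/-- A hole of a planar set X is a bounded connected component of its
complement. -/
def holes (X : Set (ℝ × ℝ)) : Set (Set (ℝ × ℝ)) :=
  {C | (∃ x ∈ Xᶜ, C = connectedComponentIn Xᶜ x) ∧ Bornology.IsBounded C}

/-!
Pixelation commutes with homotheties, so it suffices to take `ε = 1`; write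
`α = n/(2n+1) < β = 1/2`. A complement point on or below the lower ray (on or above the upper
ray) sees only complement points on the vertical half-line below (above) it, so its component is
unbounded. Once `(β - α) x > 2 + α + β`, i.e. `x > 12n+5`, a suitably shifted midline of the wedge
stays at vertical distance more than `1 + slope` from both rays, hence outside the pixelation, and
every complement point of the wedge there joins it. The remaining complement points lie in cells
strictly between the two staircases in columns at most `12n+5`: for `4n+2 ≤ j ≤ 6n+1` these are
the cell `(2j+2, j)`, together with `(2j+3, j)` once `j ≥ 5n+2`. Each such row of cells is an open
rectangle whose frame is covered by pixels of the angle, and these `2n` rectangles are the holes.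
-/

open Bornology Pointwise

theorem holes_image (h : ℝ × ℝ ≃ₜ ℝ × ℝ) (hb : ∀ s, IsBounded (h '' s) ↔ IsBounded s)
    (X : Set (ℝ × ℝ)) : holes (h '' X) = (h '' ·) '' holes X := by
  have hcompl : (h '' X)ᶜ = h '' Xᶜ := (h.image_compl X).symm
  ext C
  constructor
  · rintro ⟨⟨y, hy, rfl⟩, hC⟩
    obtain ⟨x, hx, rfl⟩ : y ∈ h '' Xᶜ := hcompl ▸ hy
    refine ⟨connectedComponentIn Xᶜ x, ⟨⟨x, hx, rfl⟩, ?_⟩, ?_⟩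
    · rwa [← hb, h.image_connectedComponentIn hx, ← hcompl]
    · rw [hcompl]; exact h.image_connectedComponentIn hx
  · rintro ⟨_, ⟨⟨x, hx, rfl⟩, hC⟩, rfl⟩
    refine ⟨⟨h x, hcompl ▸ mem_image_of_mem h hx, ?_⟩, (hb _).2 hC⟩
    rw [hcompl]; exact h.image_connectedComponentIn hx

theorem card_holes_image (h : ℝ × ℝ ≃ₜ ℝ × ℝ) (hb : ∀ s, IsBounded (h '' s) ↔ IsBounded s)
    (X : Set (ℝ × ℝ)) : Nat.card (holes (h '' X)) = Nat.card (holes X) := by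
  rw [holes_image h hb, Nat.card_image_of_injective (image_injective.2 h.injective)]

theorem isBounded_image_smul {E : Type*} [NormedAddCommGroup E] [NormedSpace ℝ E] {c : ℝ}
    (hc : c ≠ 0) (s : Set E) :
    IsBounded (Homeomorph.smulOfNeZero c hc '' s) ↔ IsBounded s := by
  change IsBounded ((c • ·) '' s) ↔ _
  rw [image_smul]
  refine ⟨fun h => ?_, fun h => h.smul₀ c⟩
  simpa [smul_smul, inv_mul_cancel₀ hc] using h.smul₀ c⁻¹

theorem mem_pixel_iff_inv_smul_mem {ε : ℝ} (hε : 0 < ε) {i j : ℤ} {p : ℝ × ℝ} :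
    p ∈ pixel ε i j ↔ ε⁻¹ • p ∈ pixel 1 i j := by
  simp only [pixel, mem_prod, mem_Icc, Prod.smul_fst, Prod.smul_snd, smul_eq_mul, mul_one]
  simp only [le_inv_mul_iff₀ hε, inv_mul_le_iff₀ hε, mul_comm ε]

theorem pixelation_eq_image_smul {ε : ℝ} (hε : 0 < ε) {S : Set (ℝ × ℝ)}
    (hS : ∀ p, ε • p ∈ S ↔ p ∈ S) :
    pixelation ε S = Homeomorph.smulOfNeZero ε hε.ne' '' pixelation 1 S := by
  ext p
  change _ ↔ p ∈ (ε • ·) '' _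
  rw [image_smul, mem_smul_set_iff_inv_smul_mem₀ hε.ne']
  simp only [pixelation, mem_iUnion, exists_prop, mem_pixel_iff_inv_smul_mem hε]
  refine exists₂_congr fun i j => and_congr_left' ⟨?_, ?_⟩
  · rintro ⟨q, hq, hqS⟩
    refine ⟨ε⁻¹ • q, (mem_pixel_iff_inv_smul_mem hε).1 hq, ?_⟩
    rwa [← hS, smul_inv_smul₀ hε.ne']
  · rintro ⟨q, hq, hqS⟩
    refine ⟨ε • q, (mem_pixel_iff_inv_smul_mem hε).2 ?_, (hS q).2 hqS⟩
    rwa [inv_smul_smul₀ hε.ne']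

theorem smul_mem_angle_iff {c : ℝ} (hc : 0 < c) (β α : ℝ) (p : ℝ × ℝ) :
    c • p ∈ angle β α ↔ p ∈ angle β α := by
  simp only [angle, mem_ofPred_eq, Prod.smul_fst, Prod.smul_snd, smul_eq_mul]
  rw [show c * p.2 - α * (c * p.1) = c * (p.2 - α * p.1) by ring,
    show c * p.2 - β * (c * p.1) = c * (p.2 - β * p.1) by ring, mul_mul_mul_comm,
    mul_eq_zero, or_iff_right (mul_ne_zero hc.ne' hc.ne')]
  exact and_congr_left' (mul_nonneg_iff_of_pos_left hc)

def ray (s : ℝ) : Set (ℝ × ℝ) := {p | 0 ≤ p.1 ∧ p.2 = s * p.1}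

theorem angle_eq_union (β α : ℝ) : angle β α = ray α ∪ ray β := by
  ext p
  simp only [angle, ray, mem_ofPred_eq, mem_union, mul_eq_zero, sub_eq_zero, and_or_left]

theorem pixelation_union (ε : ℝ) (S T : Set (ℝ × ℝ)) :
    pixelation ε (S ∪ T) = pixelation ε S ∪ pixelation ε T := by
  simp only [pixelation, inter_union_distrib_left, union_nonempty, iUnion_or,
    iUnion_union_distrib]

theorem mem_pixel_one {i j : ℤ} {p : ℝ × ℝ} :
    p ∈ pixel 1 i j ↔ (i : ℝ) - 1 ≤ p.1 ∧ p.1 ≤ i ∧ (j : ℝ) - 1 ≤ p.2 ∧ p.2 ≤ j := by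
  simp only [pixel, mem_prod, mem_Icc, mul_one, Int.cast_sub, Int.cast_one, and_assoc]

theorem mem_pixel_one_ceil (p : ℝ × ℝ) : p ∈ pixel 1 ⌈p.1⌉ ⌈p.2⌉ :=
  mem_pixel_one.2 ⟨by linarith [Int.ceil_lt_add_one p.1], Int.le_ceil _,
    by linarith [Int.ceil_lt_add_one p.2], Int.le_ceil _⟩

theorem pixel_one_inter_ray_nonempty_iff {s : ℝ} (hs : 0 ≤ s) {i j : ℤ} :
    (pixel 1 i j ∩ ray s).Nonempty ↔
      0 ≤ i ∧ 0 ≤ j ∧ s * (i - 1) ≤ j ∧ (j : ℝ) - 1 ≤ s * i := by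
  constructor
  · rintro ⟨p, hp, hp0, hps⟩
    obtain ⟨h1, h2, h3, h4⟩ := mem_pixel_one.1 hp
    refine ⟨by exact_mod_cast hp0.trans h2,
      by exact_mod_cast (hps ▸ mul_nonneg hs hp0).trans h4, ?_, ?_⟩ <;> nlinarith
  · rintro ⟨hi, hj, h1, h2⟩
    have hi' : (0 : ℝ) ≤ i := by exact_mod_cast hi
    have hj' : (0 : ℝ) ≤ j := by exact_mod_cast hj
    rcases hs.eq_or_lt with rfl | hs
    · exact ⟨((i : ℝ), 0), mem_pixel_one.2 ⟨by linarith, le_rfl, by linarith, hj'⟩, hi',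
        (zero_mul _).symm⟩
    set x := max (max ((i : ℝ) - 1) 0) ((j - 1) / s)
    have hxi : x ≤ i := max_le (max_le (by linarith) hi') (by rwa [div_le_iff₀' hs])
    have hjx : (j : ℝ) - 1 ≤ s * x := by
      rw [← div_le_iff₀' hs]; exact le_max_right _ _
    have hxj : s * x ≤ j := by
      rcases max_choice (max ((i : ℝ) - 1) 0) ((j - 1) / s) with h | h <;> simp only [x, h]
      · rcases max_choice ((i : ℝ) - 1) 0 with h' | h' <;> simp only [h'] <;> linarith
      · rw [mul_div_cancel₀ _ hs.ne']; linarith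
    exact ⟨(x, s * x), mem_pixel_one.2 ⟨le_max_of_le_left (le_max_left _ _), hxi, hjx, hxj⟩,
      le_max_of_le_left (le_max_right _ _), rfl⟩

theorem lt_and_le_of_sub_one_le_of_le {a b c : ℤ} {y : ℝ} (h1 : (a : ℝ) - 1 ≤ y) (h2 : y ≤ a)
    (hb : (b : ℝ) < y) (hc : y < c) : b < a ∧ a ≤ c := by
  have hc' : (a : ℝ) < c + 1 := by linarith
  exact ⟨by exact_mod_cast hb.trans_le h2, Int.lt_add_one_iff.1 (by exact_mod_cast hc')⟩

section Ray

variable {s : ℝ} (hs : 0 ≤ s)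
include hs

theorem mem_pixelation_ray_iff {p : ℝ × ℝ} :
    p ∈ pixelation 1 (ray s) ↔ ∃ i j : ℤ,
      (0 ≤ i ∧ 0 ≤ j ∧ s * (i - 1) ≤ j ∧ (j : ℝ) - 1 ≤ s * i) ∧ p ∈ pixel 1 i j := by
  simp only [pixelation, mem_iUnion, exists_prop, pixel_one_inter_ray_nonempty_iff hs]

theorem mem_pixelation_ray_of_column {i : ℤ} {p : ℝ × ℝ} (hi : 0 ≤ i)
    (h1 : (i : ℝ) - 1 ≤ p.1) (h2 : p.1 ≤ i) (hy : 0 ≤ p.2) (hlo : s * (i - 1) ≤ p.2)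
    (hhi : p.2 ≤ s * i) :
    p ∈ pixelation 1 (ray s) := by
  have hc := Int.ceil_lt_add_one p.2
  refine (mem_pixelation_ray_iff hs).2 ⟨i, ⌈p.2⌉, ⟨hi, Int.ceil_nonneg hy, ?_, ?_⟩,
    mem_pixel_one.2 ⟨h1, h2, by linarith, Int.le_ceil _⟩⟩ <;> linarith [Int.le_ceil p.2]

theorem mem_pixelation_ray_of_le {p q : ℝ × ℝ} (hq : q ∈ pixelation 1 (ray s))
    (h1 : q.1 = p.1) (hqp : q.2 ≤ p.2) (hp : p.2 ≤ s * max p.1 0) :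
    p ∈ pixelation 1 (ray s) := by
  obtain ⟨i, j, ⟨hi, hj, hlo, hhi⟩, hqij⟩ := (mem_pixelation_ray_iff hs).1 hq
  obtain ⟨hx1, hx2, hy1, hy2⟩ := mem_pixel_one.1 hqij
  rw [h1] at hx1 hx2
  have hi' : (0 : ℝ) ≤ i := by exact_mod_cast hi
  by_cases hpj : p.2 ≤ j
  · exact (mem_pixelation_ray_iff hs).2
      ⟨i, j, ⟨hi, hj, hlo, hhi⟩, mem_pixel_one.2 ⟨hx1, hx2, hqp.trans' hy1, hpj⟩⟩
  · have hj' : (0 : ℝ) ≤ j := by exact_mod_cast hj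
    exact mem_pixelation_ray_of_column hs hi hx1 hx2 (by linarith) (by linarith)
      (hp.trans (mul_le_mul_of_nonneg_left (max_le hx2 hi') hs))

theorem mem_pixelation_ray_of_ge {p q : ℝ × ℝ} (hq : q ∈ pixelation 1 (ray s))
    (h1 : q.1 = p.1) (hpq : p.2 ≤ q.2) (hp : s * max p.1 0 ≤ p.2) :
    p ∈ pixelation 1 (ray s) := by
  obtain ⟨i, j, ⟨hi, hj, hlo, hhi⟩, hqij⟩ := (mem_pixelation_ray_iff hs).1 hq
  obtain ⟨hx1, hx2, hy1, hy2⟩ := mem_pixel_one.1 hqij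
  rw [h1] at hx1 hx2
  by_cases hpj : (j : ℝ) - 1 ≤ p.2
  · exact (mem_pixelation_ray_iff hs).2
      ⟨i, j, ⟨hi, hj, hlo, hhi⟩, mem_pixel_one.2 ⟨hx1, hx2, hpj, hpq.trans hy2⟩⟩
  · have h0 : 0 ≤ s * max p.1 0 := mul_nonneg hs (le_max_right _ _)
    refine mem_pixelation_ray_of_column hs hi hx1 hx2 (h0.trans hp) ?_ (by linarith)
    exact (mul_le_mul_of_nonneg_left (hx1.trans (le_max_left _ _)) hs).trans hp

theorem abs_sub_mul_le_of_mem_pixelation_ray {p : ℝ × ℝ} (hp : p ∈ pixelation 1 (ray s)) :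
    |p.2 - s * p.1| ≤ s + 1 := by
  obtain ⟨i, j, ⟨-, -, hlo, hhi⟩, hpij⟩ := (mem_pixelation_ray_iff hs).1 hp
  obtain ⟨hx1, hx2, hy1, hy2⟩ := mem_pixel_one.1 hpij
  rw [abs_le]
  constructor <;> nlinarith

end Ray

theorem not_isBounded_connectedComponentIn_of_subset {X : Type*} [TopologicalSpace X]
    [Bornology X] {Ω T : Set X} {x : X}
    (hT : IsPreconnected T) (hTΩ : T ⊆ Ω) (hx : x ∈ T) (hunb : ¬IsBounded T) :
    ¬IsBounded (connectedComponentIn Ω x) :=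
  fun hb => hunb (hb.subset (hT.subset_connectedComponentIn hx hTΩ))

theorem connectedComponentIn_eq_of_closure_inter_subset {X : Type*} [TopologicalSpace X]
    {Ω V : Set X} {x : X}
    (hVo : IsOpen V) (hVc : IsPreconnected V) (hVΩ : V ⊆ Ω) (hcl : closure V ∩ Ω ⊆ V)
    (hx : x ∈ V) : connectedComponentIn Ω x = V := by
  refine Subset.antisymm ?_ (hVc.subset_connectedComponentIn hx hVΩ)
  have hcover : connectedComponentIn Ω x ⊆ V ∪ (closure V)ᶜ := fun q hq => by
    by_cases h : q ∈ closure V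
    · exact Or.inl (hcl ⟨h, connectedComponentIn_subset Ω x hq⟩)
    · exact Or.inr h
  exact isPreconnected_connectedComponentIn.subset_left_of_subset_union hVo
    isClosed_closure.isOpen_compl (disjoint_compl_right_iff_subset.2 subset_closure) hcover
    ⟨x, mem_connectedComponentIn (hVΩ hx), hx⟩

section Angle

variable {α β : ℝ} (hα : 0 ≤ α) (hαβ : α ≤ β)
include hα hαβ

theorem not_isBounded_connectedComponentIn_of_le {p : ℝ × ℝ}
    (hp : p ∉ pixelation 1 (angle β α)) (hle : p.2 ≤ α * max p.1 0) :
    ¬IsBounded (connectedComponentIn (pixelation 1 (angle β α))ᶜ p) := by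
  have hβ := hα.trans hαβ
  refine not_isBounded_connectedComponentIn_of_subset (T := {p.1} ×ˢ Iic p.2)
    (isPreconnected_singleton.prod isPreconnected_Iic) ?_ ⟨rfl, self_mem_Iic⟩
    fun h => not_bddBelow_Iic _ (h.snd_of_prod (singleton_nonempty p.1)).bddBelow
  rintro q ⟨hq1, hq2⟩ hq
  rw [angle_eq_union, pixelation_union] at hp hq
  rcases hq with hq | hq
  · exact hp (Or.inl (mem_pixelation_ray_of_le hα hq hq1 hq2 hle))
  · exact hp (Or.inr (mem_pixelation_ray_of_le hβ hq hq1 hq2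
      (hle.trans (mul_le_mul_of_nonneg_right hαβ (le_max_right _ _)))))

theorem not_isBounded_connectedComponentIn_of_ge {p : ℝ × ℝ}
    (hp : p ∉ pixelation 1 (angle β α)) (hge : β * max p.1 0 ≤ p.2) :
    ¬IsBounded (connectedComponentIn (pixelation 1 (angle β α))ᶜ p) := by
  have hβ := hα.trans hαβ
  refine not_isBounded_connectedComponentIn_of_subset (T := {p.1} ×ˢ Ici p.2)
    (isPreconnected_singleton.prod isPreconnected_Ici) ?_ ⟨rfl, self_mem_Ici⟩
    fun h => not_bddAbove_Ici _ (h.snd_of_prod (singleton_nonempty p.1)).bddAbove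
  rintro q ⟨hq1, hq2⟩ hq
  rw [angle_eq_union, pixelation_union] at hp hq
  rcases hq with hq | hq
  · exact hp (Or.inl (mem_pixelation_ray_of_ge hα hq hq1 hq2
      ((mul_le_mul_of_nonneg_right hαβ (le_max_right _ _)).trans hge)))
  · exact hp (Or.inr (mem_pixelation_ray_of_ge hβ hq hq1 hq2 hge))

theorem not_isBounded_connectedComponentIn_of_far {p : ℝ × ℝ}
    (hp : p ∉ pixelation 1 (angle β α)) (hlo : α * p.1 ≤ p.2) (hhi : p.2 ≤ β * p.1)
    (hfar : 2 + α + β < (β - α) * p.1) :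
    ¬IsBounded (connectedComponentIn (pixelation 1 (angle β α))ᶜ p) := by
  have hβ := hα.trans hαβ
  have hp1 : 0 < p.1 := by nlinarith
  -- offset so that the vertical distance to each ray exceeds its slope plus one beyond `p.1`
  set ℓ : ℝ → ℝ := fun x => (α + β) / 2 * x + (α - β) / 2
  have hfarα (x : ℝ) (hx : p.1 ≤ x) : α + 1 < ℓ x - α * x := by simp only [ℓ]; nlinarith
  have hfarβ (x : ℝ) (hx : p.1 ≤ x) : β + 1 < β * x - ℓ x := by simp only [ℓ]; nlinarith
  rw [angle_eq_union, pixelation_union] at hp ⊢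
  refine not_isBounded_connectedComponentIn_of_subset
    (T := {p.1} ×ˢ uIcc p.2 (ℓ p.1) ∪ (fun x => (x, ℓ x)) '' Ici p.1) ?_ ?_
    (Or.inl ⟨rfl, left_mem_uIcc⟩) ?_
  · exact (isPreconnected_singleton.prod isPreconnected_uIcc).union (p.1, ℓ p.1)
      ⟨rfl, right_mem_uIcc⟩ ⟨p.1, self_mem_Ici, rfl⟩
      (isPreconnected_Ici.image _ (by fun_prop : Continuous fun x => (x, ℓ x)).continuousOn)
  · have hmax : max p.1 0 = p.1 := max_eq_left hp1.le
    rintro q (⟨hq1, hq2⟩ | ⟨x, hx, rfl⟩) (hq | hq)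
    · rw [mem_singleton_iff] at hq1
      have := abs_le.1 (abs_sub_mul_le_of_mem_pixelation_ray hα hq)
      rw [hq1] at this
      have hpq : p.2 ≤ q.2 := by
        rcases mem_uIcc.1 hq2 with h | h
        · exact h.1
        · linarith [hfarα p.1 le_rfl]
      exact hp (Or.inl (mem_pixelation_ray_of_ge hα hq hq1 hpq (by rwa [hmax])))
    · rw [mem_singleton_iff] at hq1
      have := abs_le.1 (abs_sub_mul_le_of_mem_pixelation_ray hβ hq)
      rw [hq1] at this
      have hqp : q.2 ≤ p.2 := by
        rcases mem_uIcc.1 hq2 with h | h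
        · linarith [hfarβ p.1 le_rfl]
        · exact h.2
      exact hp (Or.inr (mem_pixelation_ray_of_le hβ hq hq1 hqp (by rwa [hmax])))
    · linarith [hfarα x hx, (abs_le.1 (abs_sub_mul_le_of_mem_pixelation_ray hα hq)).2]
    · linarith [hfarβ x hx, (abs_le.1 (abs_sub_mul_le_of_mem_pixelation_ray hβ hq)).1]
  · intro h
    refine not_bddAbove_Ici p.1 ?_
    simpa [image_image] using (h.subset subset_union_right).image_fst.bddAbove

theorem mem_wedge_of_isBounded_connectedComponentIn {p : ℝ × ℝ}
    (hp : p ∉ pixelation 1 (angle β α))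
    (hb : IsBounded (connectedComponentIn (pixelation 1 (angle β α))ᶜ p)) :
    α * p.1 < p.2 ∧ p.2 < β * p.1 ∧ (β - α) * p.1 ≤ 2 + α + β := by
  have hlo : α * max p.1 0 < p.2 :=
    lt_of_not_ge fun h => not_isBounded_connectedComponentIn_of_le hα hαβ hp h hb
  have hhi : p.2 < β * max p.1 0 :=
    lt_of_not_ge fun h => not_isBounded_connectedComponentIn_of_ge hα hαβ hp h hb
  have hp1 : 0 < p.1 := by
    by_contra h
    rw [max_eq_right (not_lt.1 h)] at hlo hhi
    linarith
  rw [max_eq_left hp1.le] at hlo hhi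
  exact ⟨hlo, hhi, le_of_not_gt fun h =>
    not_isBounded_connectedComponentIn_of_far hα hαβ hp hlo.le hhi.le h hb⟩

theorem mul_lt_sub_one_and_lt_mul_of_mem_pixel {p : ℝ × ℝ} {i j : ℤ}
    (hp : p ∉ pixelation 1 (angle β α)) (hpij : p ∈ pixel 1 i j) (hlo : α * p.1 < p.2)
    (hhi : p.2 < β * p.1) : α * i < j - 1 ∧ (j : ℝ) < β * (i - 1) := by
  obtain ⟨hx1, hx2, hy1, hy2⟩ := mem_pixel_one.1 hpij
  have hp1 : 0 < p.1 := by nlinarith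
  have hi : 0 ≤ i := by exact_mod_cast hp1.le.trans hx2
  have hj : 0 ≤ j := by exact_mod_cast (mul_nonneg hα hp1.le).trans (hlo.le.trans hy2)
  rw [angle_eq_union, pixelation_union, mem_union, not_or, mem_pixelation_ray_iff hα,
    mem_pixelation_ray_iff (hα.trans hαβ)] at hp
  constructor
  · by_contra h
    exact hp.1 ⟨i, j, ⟨hi, hj, by nlinarith, by linarith⟩, hpij⟩
  · by_contra h
    exact hp.2 ⟨i, j, ⟨hi, hj, by linarith, by nlinarith⟩, hpij⟩

end Angle

section FareyAngle

variable {n : ℕ}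

theorem lowerSlope_mul_le_iff (a b : ℤ) :
    (n : ℝ) / (2 * n + 1) * a ≤ b ↔ n * a ≤ (2 * n + 1) * b := by
  rw [div_mul_eq_mul_div, div_le_iff₀ (by positivity), mul_comm (b : ℝ)]
  exact_mod_cast Iff.rfl

theorem le_lowerSlope_mul_iff (a b : ℤ) :
    (a : ℝ) ≤ n / (2 * n + 1) * b ↔ (2 * n + 1) * a ≤ n * b := by
  rw [div_mul_eq_mul_div, le_div_iff₀ (by positivity), mul_comm (a : ℝ)]
  exact_mod_cast Iff.rfl

theorem mem_pixelation_fareyAngle_iff {p : ℝ × ℝ} :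
    p ∈ pixelation 1 (angle (1 / 2) ((n : ℝ) / (2 * n + 1))) ↔ ∃ i j : ℤ, p ∈ pixel 1 i j ∧
      0 ≤ i ∧ 0 ≤ j ∧ ((n * (i - 1) ≤ (2 * n + 1) * j ∧ (2 * n + 1) * (j - 1) ≤ n * i) ∨
        (i - 1 ≤ 2 * j ∧ 2 * (j - 1) ≤ i)) := by
  have hsub (a : ℤ) : (a : ℝ) - 1 = ((a - 1 : ℤ) : ℝ) := by push_cast; ring
  have hhalf (a b : ℤ) : (1 / 2 : ℝ) * a ≤ b ↔ a ≤ 2 * b := by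
    rw [← Int.cast_le (R := ℝ)]; push_cast; constructor <;> intro <;> linarith
  have hhalf' (a b : ℤ) : (a : ℝ) ≤ 1 / 2 * b ↔ 2 * a ≤ b := by
    rw [← Int.cast_le (R := ℝ)]; push_cast; constructor <;> intro <;> linarith
  rw [angle_eq_union, pixelation_union, mem_union, mem_pixelation_ray_iff (by positivity),
    mem_pixelation_ray_iff (by norm_num)]
  simp only [hsub, lowerSlope_mul_le_iff, le_lowerSlope_mul_iff, hhalf, hhalf', ← exists_or]
  exact exists₂_congr fun i j => by tauto

def holeRight (n : ℕ) (j : ℤ) : ℤ := if j < 5 * n + 2 then 2 * j + 2 else 2 * j + 3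

-- The cells of row `j` strictly between the two staircases are the columns
-- `2j+2, …, holeRight n j` (for `4n+2 ≤ j ≤ 6n+1`).
def hole (n : ℕ) (j : ℤ) : Set (ℝ × ℝ) :=
  Ioo (2 * j + 1 : ℝ) (holeRight n j) ×ˢ Ioo (j - 1 : ℝ) j

theorem le_holeRight (j : ℤ) : 2 * j + 2 ≤ holeRight n j := by
  unfold holeRight; split_ifs <;> omega

theorem holeRight_le (j : ℤ) : holeRight n j ≤ 2 * j + 3 := by
  unfold holeRight; split_ifs <;> omega

theorem le_and_le_holeRight_of_lt {i j : ℤ} (hlo : n * i < (2 * n + 1) * (j - 1))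
    (hhi : 2 * j + 2 ≤ i) (hi : i ≤ 12 * n + 6) : 4 * n + 2 ≤ j ∧ i ≤ holeRight n j := by
  obtain ⟨t, ht, rfl⟩ : ∃ t : ℤ, 0 ≤ t ∧ i = 2 * j + 2 + t :=
    ⟨i - 2 * j - 2, by omega, by ring⟩
  unfold holeRight
  rcases (show t = 0 ∨ t = 1 ∨ 2 ≤ t by omega) with rfl | rfl | ht2
  · exact ⟨by linarith, by split_ifs <;> omega⟩
  · exact ⟨by linarith, by split_ifs <;> linarith⟩
  · nlinarith

theorem mul_holeRight_lt {j : ℤ} (hj : 4 * n + 2 ≤ j) :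
    n * holeRight n j < (2 * n + 1) * (j - 1) := by
  unfold holeRight; split_ifs <;> linarith

theorem hole_subset_compl {j : ℤ} (hj : 4 * n + 2 ≤ j) :
    hole n j ⊆ (pixelation 1 (angle (1 / 2) ((n : ℝ) / (2 * n + 1))))ᶜ := by
  rintro q ⟨⟨hx1, hx2⟩, hy1, hy2⟩ hq
  obtain ⟨i', j', hq', -, -, hc⟩ := mem_pixelation_fareyAngle_iff.1 hq
  obtain ⟨hx1', hx2', hy1', hy2'⟩ := mem_pixel_one.1 hq'
  obtain ⟨hi1, hi2⟩ :=
    lt_and_le_of_sub_one_le_of_le (b := 2 * j + 1) hx1' hx2' (by exact_mod_cast hx1) hx2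
  obtain ⟨hj1, hj2⟩ :=
    lt_and_le_of_sub_one_le_of_le (b := j - 1) hy1' hy2' (by exact_mod_cast hy1) hy2
  obtain rfl : j' = j := by omega
  rcases hc with hc | hc
  · linarith [mul_holeRight_lt hj, mul_le_mul_of_nonneg_left hi2 (Int.natCast_nonneg n)]
  · omega

theorem lower_cell_holeRight_add_one {j : ℤ} (hj : 4 * n + 2 ≤ j) (hj' : j ≤ 6 * n + 1) :
    n * holeRight n j ≤ (2 * n + 1) * j ∧ (2 * n + 1) * (j - 1) ≤ n * (holeRight n j + 1) := by
  unfold holeRight; split_ifs <;> constructor <;> linarith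

theorem lower_cell_below_hole {i j : ℤ} (hj : 4 * n + 2 ≤ j) (hj' : j ≤ 6 * n + 1)
    (hi : 2 * j + 2 ≤ i) (hi' : i ≤ holeRight n j) :
    n * (i - 1) ≤ (2 * n + 1) * (j - 1) ∧ (2 * n + 1) * (j - 1 - 1) ≤ n * i := by
  have hn : (0 : ℤ) ≤ n := Int.natCast_nonneg n
  have h1 : n * (holeRight n j - 1) ≤ (2 * n + 1) * (j - 1) := by
    unfold holeRight; split_ifs <;> linarith
  constructor
  · linarith [mul_le_mul_of_nonneg_left (by omega : i - 1 ≤ holeRight n j - 1) hn]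
  · linarith [mul_le_mul_of_nonneg_left hi hn]

theorem closure_hole_inter_compl_subset {j : ℤ} (hj : 4 * n + 2 ≤ j) (hj' : j ≤ 6 * n + 1) :
    closure (hole n j) ∩ (pixelation 1 (angle (1 / 2) ((n : ℝ) / (2 * n + 1))))ᶜ ⊆ hole n j := by
  have hr1 := le_holeRight (n := n) j
  have hr2 := holeRight_le (n := n) j
  have hr : (2 * j + 1 : ℝ) < holeRight n j := by
    exact_mod_cast (by omega : 2 * j + 1 < holeRight n j)
  rintro q ⟨hq, hqX⟩
  rw [hole, closure_prod_eq, closure_Ioo hr.ne, closure_Ioo (by linarith)] at hq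
  obtain ⟨⟨hx1, hx2⟩, hy1, hy2⟩ := hq
  rw [mem_compl_iff, mem_pixelation_fareyAngle_iff] at hqX
  have hx1' : 2 * j + 1 < q.1 := by
    refine lt_of_le_of_ne hx1 fun h => hqX ⟨2 * j + 1, j, mem_pixel_one.2 ?_, by omega,
      by omega, Or.inr ⟨by omega, by omega⟩⟩
    push_cast; exact ⟨by linarith, h.ge, by linarith, hy2⟩
  have hx2' : q.1 < holeRight n j := by
    refine lt_of_le_of_ne hx2 fun h => hqX ⟨holeRight n j + 1, j, mem_pixel_one.2 ?_, by omega,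
      by omega, Or.inl (by simpa using lower_cell_holeRight_add_one hj hj')⟩
    push_cast; exact ⟨by linarith, by linarith, by linarith, hy2⟩
  have hq1 := Int.ceil_lt_add_one q.1
  obtain ⟨hi1, hi2⟩ := lt_and_le_of_sub_one_le_of_le (a := ⌈q.1⌉) (b := 2 * j + 1)
    (by linarith) (Int.le_ceil _) (by exact_mod_cast hx1') hx2'
  refine ⟨⟨hx1', hx2'⟩, lt_of_le_of_ne hy1 fun h => hqX ⟨⌈q.1⌉, j - 1, mem_pixel_one.2 ?_,
    by omega, by omega, Or.inl (lower_cell_below_hole hj hj' (by omega) hi2)⟩,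
    lt_of_le_of_ne hy2 fun h => hqX ⟨⌈q.1⌉, j + 1, mem_pixel_one.2 ?_, by omega, by omega,
      Or.inr ⟨by omega, by omega⟩⟩⟩
  · push_cast; exact ⟨by linarith, Int.le_ceil _, by linarith, h.ge⟩
  · push_cast; exact ⟨by linarith, Int.le_ceil _, by linarith, by linarith⟩

theorem center_mem_hole (j : ℤ) : ((2 * j + 3 / 2 : ℝ), (j - 1 / 2 : ℝ)) ∈ hole n j := by
  have : (2 * j + 2 : ℝ) ≤ holeRight n j := by exact_mod_cast le_holeRight j
  exact ⟨⟨by linarith, by linarith⟩, by linarith, by linarith⟩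

theorem hole_injective : Function.Injective (hole n) := by
  intro j j' h
  obtain ⟨-, h1, h2⟩ := h ▸ center_mem_hole (n := n) j
  have : j' - 1 < j := by exact_mod_cast (by linarith : (j' : ℝ) - 1 < j)
  have : j < j' + 1 := by exact_mod_cast (by linarith : (j : ℝ) < j' + 1)
  omega

theorem isBounded_hole (j : ℤ) : IsBounded (hole n j) :=
  Metric.isBounded_Ioo _ _ |>.prod (Metric.isBounded_Ioo _ _)

theorem connectedComponentIn_hole {j : ℤ} (hj : 4 * n + 2 ≤ j) (hj' : j ≤ 6 * n + 1)
    {x : ℝ × ℝ} (hx : x ∈ hole n j) :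
    connectedComponentIn (pixelation 1 (angle (1 / 2) ((n : ℝ) / (2 * n + 1))))ᶜ x = hole n j :=
  connectedComponentIn_eq_of_closure_inter_subset (isOpen_Ioo.prod isOpen_Ioo)
    ((convex_Ioo _ _).prod (convex_Ioo _ _)).isPreconnected (hole_subset_compl hj)
    (closure_hole_inter_compl_subset hj hj') hx

theorem lowerSlope_le_half : (n : ℝ) / (2 * n + 1) ≤ 1 / 2 := by
  rw [div_le_iff₀ (by positivity)]; linarith

theorem exists_mem_hole {p : ℝ × ℝ}
    (hp : p ∉ pixelation 1 (angle (1 / 2) ((n : ℝ) / (2 * n + 1))))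
    (hlo : (n : ℝ) / (2 * n + 1) * p.1 < p.2) (hhi : p.2 < 1 / 2 * p.1)
    (hx : p.1 ≤ 12 * n + 5) :
    ∃ j : ℤ, (4 * n + 2 ≤ j ∧ j ≤ 6 * n + 1) ∧ p ∈ hole n j := by
  have hgap {i j : ℤ} (hpij : p ∈ pixel 1 i j) (hi : i ≤ 12 * n + 6) :
      4 * n + 2 ≤ j ∧ 2 * j + 2 ≤ i ∧ i ≤ holeRight n j := by
    obtain ⟨h1, h2⟩ := mul_lt_sub_one_and_lt_mul_of_mem_pixel (by positivity) lowerSlope_le_half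
      hp hpij hlo hhi
    have h1' : n * i < (2 * n + 1) * (j - 1) := by
      rw [← not_le, ← le_lowerSlope_mul_iff]; push_cast; exact not_le.2 h1
    have h2' : 2 * j + 2 ≤ i := by
      have : 2 * j < i - 1 := by exact_mod_cast (by linarith : (2 * j : ℝ) < i - 1)
      omega
    obtain ⟨hj, hir⟩ := le_and_le_holeRight_of_lt h1' h2' hi
    exact ⟨hj, h2', hir⟩
  have hpix := mem_pixel_one_ceil p
  obtain ⟨hx1, hx2, hy1, hy2⟩ := mem_pixel_one.1 hpix
  have hi : ⌈p.1⌉ ≤ 12 * n + 5 := Int.ceil_le.2 (by exact_mod_cast hx)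
  obtain ⟨hj, hij, hir⟩ := hgap hpix (by omega)
  have hr := holeRight_le (n := n) ⌈p.2⌉
  -- on the right or top edge of its cell, `p` also lies in the neighbouring cell, which `hgap`
  -- excludes
  refine ⟨⌈p.2⌉, ⟨hj, by omega⟩, ⟨?_, ?_⟩, ?_, ?_⟩
  · have : (2 * ⌈p.2⌉ + 2 : ℝ) ≤ ⌈p.1⌉ := by exact_mod_cast hij
    linarith [Int.ceil_lt_add_one p.1]
  · refine lt_of_le_of_ne (hx2.trans (by exact_mod_cast hir)) fun h => ?_
    have := (hgap (i := holeRight n ⌈p.2⌉ + 1) (mem_pixel_one.2 ⟨by push_cast; linarith,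
      by push_cast; linarith, hy1, hy2⟩) (by omega)).2.2
    omega
  · linarith [Int.ceil_lt_add_one p.2]
  · refine lt_of_le_of_ne hy2 fun h => ?_
    have := (hgap (j := ⌈p.2⌉ + 1) (mem_pixel_one.2 ⟨hx1, hx2, by push_cast; linarith,
      by push_cast; linarith⟩) (by omega)).2.1
    omega

theorem holes_fareyAngle :
    holes (pixelation 1 (angle (1 / 2) ((n : ℝ) / (2 * n + 1)))) =
      hole n '' Icc (4 * n + 2) (6 * n + 1) := by
  ext C
  constructor
  · rintro ⟨⟨x, hx, rfl⟩, hb⟩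
    obtain ⟨hlo, hhi, hfar⟩ :=
      mem_wedge_of_isBounded_connectedComponentIn (by positivity) lowerSlope_le_half hx hb
    have hx1 : x.1 ≤ 12 * n + 5 := by
      have e1 : (1 / 2 - (n : ℝ) / (2 * n + 1)) * x.1 = x.1 / (2 * (2 * n + 1)) := by
        field_simp; ring
      have e2 : 2 + (n : ℝ) / (2 * n + 1) + 1 / 2 = (12 * n + 5) / (2 * (2 * n + 1)) := by
        field_simp; ring
      rwa [e1, e2, div_le_div_iff_of_pos_right (by positivity)] at hfar
    obtain ⟨j, hj, hxj⟩ := exists_mem_hole hx hlo hhi hx1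
    exact ⟨j, hj, (connectedComponentIn_hole hj.1 hj.2 hxj).symm⟩
  · rintro ⟨j, hj, rfl⟩
    exact ⟨⟨_, hole_subset_compl hj.1 (center_mem_hole j),
      (connectedComponentIn_hole hj.1 hj.2 (center_mem_hole j)).symm⟩, isBounded_hole j⟩

end FareyAngle

theorem holes_of_farey_angle_general (n : ℕ) (ε : ℝ) (hε : 0 < ε) :
    Nat.card (holes (pixelation ε (angle (1 / 2) ((n : ℝ) / (2 * n + 1))))) =
      2 * n := by
  rw [pixelation_eq_image_smul hε (smul_mem_angle_iff hε _ _),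
    card_holes_image _ (isBounded_image_smul hε.ne'), holes_fareyAngle,
    Nat.card_image_of_injective hole_injective, Nat.card_eq_fintype_card, Fintype.card_Icc,
    Int.card_Icc]
  omega

/-- For every positive integer n and every ε > 0, the ε-pixelation of the
angle A(1/2, n/(2n+1)) has exactly 2n holes. -/
theorem holes_of_farey_angle (n : ℕ) (hn : 0 < n) (ε : ℝ) (hε : 0 < ε) :
    Nat.card (holes (pixelation ε (angle (1 / 2) ((n : ℝ) / (2 * n + 1))))) =
      2 * n :=
  holes_of_farey_angle_general n ε hε
end
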